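/- Let 1 < β ≤ 2. Then w_0^{(β)} = β/2 > 0, w_1^{(β)} = (2 - β - β²)/2 < 0, w_2^{(β)} = β(β² + β - 4)/4, and 1 ≥ w_0^{(β)} ≥ w_3^{(β)}, with the tail nonincreasing and nonnegative: w_k^{(β)} ≥ w_{k+1}^{(β)} ≥ 0 for all k ≥ 3. -/
import Mathlib


/-- Grünwald–Letnikov coefficients: `g γ 0 = 1`, `g γ k = (1 - (γ+1)/k) * g γ (k-1)`. -/
noncomputable def g (γ : ℝ) : ℕ → ℝ
  | 0 => 1
  | k + 1 => (1 - (γ + 1) / ((k : ℝ) + 1)) * g γ k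

/-- WSGD coefficients: `w γ 0 = (γ/2) g γ 0`, `w γ k = (γ/2) g γ k + ((2-γ)/2) g γ (k-1)`. -/
noncomputable def w (γ : ℝ) : ℕ → ℝ
  | 0 => γ / 2 * g γ 0
  | k + 1 => γ / 2 * g γ (k + 1) + (2 - γ) / 2 * g γ k

lemma g_succ (γ : ℝ) (k : ℕ) : g γ (k + 1) = (1 - (γ + 1) / ((k : ℝ) + 1)) * g γ k := rfl

lemma w_succ (γ : ℝ) (k : ℕ) : w γ (k + 1) = γ / 2 * g γ (k + 1) + (2 - γ) / 2 * g γ k := rfl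

lemma g_two (β : ℝ) : g β 2 = β * (β - 1) / 2 := by
  simp [g, show (2:ℕ) = 0+1+1 from rfl]
  ring

lemma g_nonneg (β : ℝ) (hβ1 : 1 < β) (hβ2 : β ≤ 2) : ∀ k : ℕ, 0 ≤ g β (k + 2) := by
  intro k
  induction k with
  | zero => rw [g_two]; nlinarith
  | succ n ih =>
    have h : g β (n + 1 + 2) = (1 - (β + 1) / ((n : ℝ) + 2 + 1)) * g β (n + 2) := by
      have := g_succ β (n + 2)
      push_cast at this ⊢
      convert this using 3 <;> ring
    rw [h]
    have hn : (0 : ℝ) ≤ (n : ℝ) := Nat.cast_nonneg n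
    have hfac : 0 ≤ 1 - (β + 1) / ((n : ℝ) + 2 + 1) := by
      rw [sub_nonneg, div_le_one (by linarith)]; linarith
    exact mul_nonneg hfac ih

lemma g_mono (β : ℝ) (hβ1 : 1 < β) (hβ2 : β ≤ 2) : ∀ k : ℕ, g β (k + 3) ≤ g β (k + 2) := by
  intro k
  have h : g β (k + 3) = (1 - (β + 1) / ((k : ℝ) + 2 + 1)) * g β (k + 2) := by
    have := g_succ β (k + 2)
    push_cast at this ⊢
    convert this using 3 <;> ring
  rw [h]
  have hg := g_nonneg β hβ1 hβ2 k
  have hn : (0 : ℝ) ≤ (k : ℝ) := Nat.cast_nonneg k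
  have hfac : 1 - (β + 1) / ((k : ℝ) + 2 + 1) ≤ 1 := by
    have : 0 ≤ (β + 1) / ((k : ℝ) + 2 + 1) := by positivity
    linarith
  nlinarith

theorem stmt_9 (β : ℝ) (hβ1 : 1 < β) (hβ2 : β ≤ 2) :
    w β 0 = β / 2 ∧ 0 < w β 0 ∧
    w β 1 = (2 - β - β ^ 2) / 2 ∧ w β 1 < 0 ∧
    w β 2 = β * (β ^ 2 + β - 4) / 4 ∧
    w β 0 ≤ 1 ∧ w β 3 ≤ w β 0 ∧
    (∀ k : ℕ, 3 ≤ k → w β (k + 1) ≤ w β k ∧ 0 ≤ w β (k + 1)) := by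
  have hw0 : w β 0 = β / 2 := by simp [w, g]
  have hg0 : g β 0 = 1 := rfl
  have hg1 : g β 1 = -β := by
    simp [g, show (1:ℕ) = 0+1 from rfl]
  have hg2 : g β 2 = β * (β - 1) / 2 := g_two β
  have hg3 : g β 3 = (1 - (β + 1) / 3) * (β * (β - 1) / 2) := by
    have h : g β 3 = (1 - (β + 1) / ((2 : ℝ) + 1)) * g β 2 := g_succ β 2
    rw [hg2] at h
    rw [h]; norm_num
  have hw1 : w β 1 = (2 - β - β ^ 2) / 2 := by
    have h : w β 1 = β / 2 * g β 1 + (2 - β) / 2 * g β 0 := w_succ β 0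
    rw [hg1, hg0] at h
    rw [h]; ring
  have hw2 : w β 2 = β * (β ^ 2 + β - 4) / 4 := by
    have h : w β 2 = β / 2 * g β 2 + (2 - β) / 2 * g β 1 := w_succ β 1
    rw [hg2, hg1] at h
    rw [h]; ring
  have hw3 : w β 3 = β / 2 * ((1 - (β + 1) / 3) * (β * (β - 1) / 2)) +
      (2 - β) / 2 * (β * (β - 1) / 2) := by
    have h : w β 3 = β / 2 * g β 3 + (2 - β) / 2 * g β 2 := w_succ β 2
    rw [hg3, hg2] at h
    rw [h]
  refine ⟨hw0, by rw [hw0]; linarith, hw1, by rw [hw1]; nlinarith, hw2,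
    by rw [hw0]; linarith, ?_, ?_⟩
  · rw [hw0, hw3]
    nlinarith [sq_nonneg (2 * β - 3), mul_nonneg (by linarith : (0:ℝ) ≤ β - 1)
      (by linarith : (0:ℝ) ≤ 2 - β), sq_nonneg (β - 1), sq_nonneg (2 - β)]
  · intro k hk
    obtain ⟨j, rfl⟩ : ∃ j, k = j + 3 := ⟨k - 3, by omega⟩
    have h1 : 0 ≤ g β (j + 2) := g_nonneg β hβ1 hβ2 j
    have h2 : 0 ≤ g β (j + 3) := g_nonneg β hβ1 hβ2 (j + 1)
    have h3 : 0 ≤ g β (j + 4) := g_nonneg β hβ1 hβ2 (j + 2)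
    have m1 : g β (j + 3) ≤ g β (j + 2) := g_mono β hβ1 hβ2 j
    have m2 : g β (j + 4) ≤ g β (j + 3) := g_mono β hβ1 hβ2 (j + 1)
    have e1 : w β (j + 3 + 1) = β / 2 * g β (j + 4) + (2 - β) / 2 * g β (j + 3) :=
      w_succ β (j + 3)
    have e2 : w β (j + 3) = β / 2 * g β (j + 3) + (2 - β) / 2 * g β (j + 2) :=
      w_succ β (j + 2)
    rw [e1, e2]
    have t1 : 0 ≤ β / 2 * (g β (j + 3) - g β (j + 4)) :=
      mul_nonneg (by linarith) (by linarith)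
    have t2 : 0 ≤ (2 - β) / 2 * (g β (j + 2) - g β (j + 3)) :=
      mul_nonneg (by linarith) (by linarith)
    have t3 : 0 ≤ β / 2 * g β (j + 4) := mul_nonneg (by linarith) h3
    have t4 : 0 ≤ (2 - β) / 2 * g β (j + 3) := mul_nonneg (by linarith) h2
    constructor
    · nlinarith
    · linarith
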